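/- arXiv:2411.12599 — 2 statements merged into one kernel-verified Lean document; each statement's English description precedes it below -/
import Mathlib

section
/- Let G be a connected triangle-free graph that is not isomorphic to K₁ or K₂. Then in the central graph C[G], every original vertex of G has eccentricity exactly 2, and every subdivision vertex has eccentricity 2 or 3. -/
/-!
In `C[G]` an original vertex `v` is adjacent to its non-neighbours and to its incident
subdivision vertices. A neighbour `u` is reached through the subdivision vertex of `vu`, and a
subdivision vertex of an edge `ab` missing `v` through whichever of `a`, `b` is not adjacent to
`v`, which exists because `G` is triangle-free. Hence `v` has eccentricity at most 2, and a
subdivision vertex, one step from an original vertex, at most 3. Distance 2 is attained from `v`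
at a neighbour (connectivity), and from a subdivision vertex at an original vertex off its edge
(excluding `K₁` and `K₂` leaves at least three vertices).
-/

open Finset

namespace EccPaper

variable {V : Type*}

noncomputable def ecc [Fintype V] (G : SimpleGraph V) (v : V) : ℕ :=
  Finset.univ.sup (fun u => G.dist v u)

noncomputable def graphDiam [Fintype V] (G : SimpleGraph V) : ℕ :=
  Finset.univ.sup (fun v => ecc G v)

noncomputable def eccMatR [Fintype V] (G : SimpleGraph V) : Matrix V V ℝ :=
  fun u v => if G.dist u v = min (ecc G u) (ecc G v) then (G.dist u v : ℝ) else 0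

noncomputable def eccWiener [Fintype V] (G : SimpleGraph V) : ℝ :=
  (∑ u, ∑ v, eccMatR G u v) / 2

noncomputable def totalEcc [Fintype V] (G : SimpleGraph V) : ℝ :=
  ∑ v, (ecc G v : ℝ)

noncomputable def eccConnIndex [Fintype V] (G : SimpleGraph V) [DecidableRel G.Adj] : ℝ :=
  ∑ v, (G.degree v : ℝ) * (ecc G v : ℝ)

lemma eccMatR_isHermitian [Fintype V] (G : SimpleGraph V) : (eccMatR G).IsHermitian := by
  ext i j
  simp only [eccMatR, Matrix.conjTranspose_apply, starRingEnd_apply, star_trivial]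
  rw [SimpleGraph.dist_comm, min_comm]

noncomputable def eccEnergy [Fintype V] [DecidableEq V] (G : SimpleGraph V) : ℝ :=
  ∑ i, |(eccMatR_isHermitian G).eigenvalues i|

noncomputable def eccSpecRadius [Fintype V] [DecidableEq V] (G : SimpleGraph V) : ℝ :=
  ⨆ i, |(eccMatR_isHermitian G).eigenvalues i|

def eccGraph [Fintype V] (G : SimpleGraph V) : SimpleGraph V where
  Adj u v := u ≠ v ∧ G.dist u v = min (ecc G u) (ecc G v)
  symm := by
    constructor
    rintro u v ⟨h1, h2⟩
    exact ⟨h1.symm, by rwa [SimpleGraph.dist_comm, min_comm]⟩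
  loopless := ⟨fun v h => h.1 rfl⟩

def IsIrreducible [Fintype V] (M : Matrix V V ℝ) : Prop :=
  ¬ ∃ S : Set V, S.Nonempty ∧ S ≠ Set.univ ∧ ∀ i ∈ S, ∀ j ∉ S, M i j = 0

def centralGraph [DecidableEq V] (G : SimpleGraph V) [DecidableRel G.Adj] :
    SimpleGraph (V ⊕ G.edgeSet) where
  Adj x y :=
    match x, y with
    | Sum.inl u, Sum.inl v => u ≠ v ∧ ¬ G.Adj u v
    | Sum.inl u, Sum.inr e => u ∈ (e : Sym2 V)
    | Sum.inr e, Sum.inl u => u ∈ (e : Sym2 V)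
    | Sum.inr _, Sum.inr _ => False
  symm := by
    constructor
    rintro (u | e) (v | f) h
    · exact ⟨h.1.symm, fun hadj => h.2 hadj.symm⟩
    · exact h
    · exact h
    · exact h
  loopless := by
    constructor
    rintro (u | e) h
    · exact h.1 rfl
    · exact h

open SimpleGraph

lemma ecc_le [Fintype V] {H : SimpleGraph V} {v : V} {n : ℕ} (h : ∀ x, H.dist v x ≤ n) :
    ecc H v ≤ n :=
  Finset.sup_le fun x _ => h x

lemma dist_le_ecc [Fintype V] (H : SimpleGraph V) (v x : V) : H.dist v x ≤ ecc H v :=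
  Finset.le_sup (mem_univ x)

lemma dist_eq_two_of_adj_of_adj {H : SimpleGraph V} {x y z : V} (hne : x ≠ z)
    (hnadj : ¬ H.Adj x z) (hxy : H.Adj x y) (hyz : H.Adj y z) : H.dist x z = 2 := by
  have hle : H.dist x z ≤ 2 := H.dist_le (.cons hxy hyz.toWalk)
  have hlt : 1 < H.dist x z :=
    Reachable.one_lt_dist_of_ne_of_not_adj ⟨.cons hxy hyz.toWalk⟩ hne hnadj
  omega

lemma exists_walk_of_dist_eq_two {H : SimpleGraph V} {x y : V} (h : H.dist x y = 2) :
    ∃ p : H.Walk x y, p.length = 2 :=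
  h ▸ exists_walk_of_dist_ne_zero (by omega)

lemma exists_mem_not_adj_of_cliqueFree_three {G : SimpleGraph V} (htf : G.CliqueFree 3)
    {e : Sym2 V} (he : e ∈ G.edgeSet) {v : V} (hv : v ∉ e) : ∃ c ∈ e, v ≠ c ∧ ¬ G.Adj v c := by
  classical
  induction e using Sym2.ind with
  | _ a b =>
    by_contra! hadj
    have hva : v ≠ a := fun h => hv (h ▸ Sym2.mem_mk_left a b)
    have hvb : v ≠ b := fun h => hv (h ▸ Sym2.mem_mk_right a b)
    exact htf {v, a, b} (is3Clique_triple_iff.mpr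
      ⟨hadj a (Sym2.mem_mk_left a b) hva, hadj b (Sym2.mem_mk_right a b) hvb, he⟩)

lemma exists_notMem_sym2_of_three_le_card [Fintype V] (hcard : 3 ≤ Fintype.card V)
    (e : Sym2 V) : ∃ u, u ∉ e := by
  classical
  induction e using Sym2.ind with
  | _ a b =>
    obtain ⟨u, -, hu⟩ := exists_mem_notMem_of_card_lt_card (s := {a, b}) (t := univ)
      (by rw [card_univ]; exact card_le_two.trans_lt hcard)
    exact ⟨u, by simpa using hu⟩

lemma eq_top_of_connected_of_card_le_two [Fintype V] {G : SimpleGraph V} (hconn : G.Connected)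
    (hcard : Fintype.card V ≤ 2) : G = ⊤ := by
  ext u v
  refine ⟨Adj.ne, fun huv => ?_⟩
  have := nontrivial_of_ne u v huv
  obtain ⟨w, huw⟩ := hconn.preconnected.exists_adj_of_nontrivial u
  obtain rfl | hwv := eq_or_ne w v
  · exact huw
  · exact absurd (Fintype.two_lt_card_iff.mpr ⟨u, v, w, huv, huw.ne, hwv.symm⟩) (by omega)

lemma three_le_card_of_connected [Fintype V] {G : SimpleGraph V} (hconn : G.Connected)
    (h1 : ¬ Nonempty (G ≃g (⊤ : SimpleGraph (Fin 1))))
    (h2 : ¬ Nonempty (G ≃g (⊤ : SimpleGraph (Fin 2)))) : 3 ≤ Fintype.card V := by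
  by_contra! hlt
  obtain rfl := eq_top_of_connected_of_card_le_two hconn (by omega)
  have : 0 < Fintype.card V := @Fintype.card_pos V _ hconn.nonempty
  interval_cases hc : Fintype.card V
  · exact h1 ⟨Iso.completeGraph (Fintype.equivFinOfCardEq hc)⟩
  · exact h2 ⟨Iso.completeGraph (Fintype.equivFinOfCardEq hc)⟩

section CentralGraph

variable [DecidableEq V] (G : SimpleGraph V) [DecidableRel G.Adj]

lemma centralGraph_adj_inl_inl {u v : V} :
    (centralGraph G).Adj (.inl u) (.inl v) ↔ u ≠ v ∧ ¬ G.Adj u v := Iff.rfl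

lemma centralGraph_adj_inl_inr {u : V} {e : G.edgeSet} :
    (centralGraph G).Adj (.inl u) (.inr e) ↔ u ∈ (e : Sym2 V) := Iff.rfl

lemma centralGraph_adj_inr_inl {u : V} {e : G.edgeSet} :
    (centralGraph G).Adj (.inr e) (.inl u) ↔ u ∈ (e : Sym2 V) := Iff.rfl

lemma centralGraph_dist_inl_of_adj {u v : V} (h : G.Adj u v) :
    (centralGraph G).dist (.inl u) (.inl v) = 2 :=
  dist_eq_two_of_adj_of_adj (by simpa using h.ne) (fun hc => hc.2 h)
    ((centralGraph_adj_inl_inr G (e := ⟨s(u, v), h⟩)).mpr (Sym2.mem_mk_left u v))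
    ((centralGraph_adj_inr_inl G).mpr (Sym2.mem_mk_right u v))

variable {G}

lemma centralGraph_dist_inl_inr_of_notMem (htf : G.CliqueFree 3) {v : V} {e : G.edgeSet}
    (hv : v ∉ (e : Sym2 V)) : (centralGraph G).dist (.inl v) (.inr e) = 2 := by
  obtain ⟨c, hce, hvc, hnadj⟩ := exists_mem_not_adj_of_cliqueFree_three htf e.2 hv
  exact dist_eq_two_of_adj_of_adj (by simp) hv
    ((centralGraph_adj_inl_inl G).mpr ⟨hvc, hnadj⟩) ((centralGraph_adj_inl_inr G).mpr hce)

lemma centralGraph_exists_walk_inl (htf : G.CliqueFree 3) (v : V) (x : V ⊕ G.edgeSet) :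
    ∃ p : (centralGraph G).Walk (.inl v) x, p.length ≤ 2 := by
  rcases x with u | e
  · obtain rfl | hvu := eq_or_ne v u
    · exact ⟨.nil, by simp⟩
    by_cases hadj : G.Adj v u
    · obtain ⟨p, hp⟩ := exists_walk_of_dist_eq_two (centralGraph_dist_inl_of_adj G hadj)
      exact ⟨p, hp.le⟩
    · exact ⟨Adj.toWalk ((centralGraph_adj_inl_inl G).mpr ⟨hvu, hadj⟩), by simp⟩
  · by_cases hv : v ∈ (e : Sym2 V)
    · exact ⟨Adj.toWalk ((centralGraph_adj_inl_inr G).mpr hv), by simp⟩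
    · obtain ⟨p, hp⟩ := exists_walk_of_dist_eq_two (centralGraph_dist_inl_inr_of_notMem htf hv)
      exact ⟨p, hp.le⟩

lemma centralGraph_dist_inl_le_two (htf : G.CliqueFree 3) (v : V) (x : V ⊕ G.edgeSet) :
    (centralGraph G).dist (.inl v) x ≤ 2 :=
  let ⟨p, hp⟩ := centralGraph_exists_walk_inl htf v x
  (dist_le p).trans hp

lemma centralGraph_dist_inr_le_three (htf : G.CliqueFree 3) (e : G.edgeSet)
    (x : V ⊕ G.edgeSet) : (centralGraph G).dist (.inr e) x ≤ 3 := by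
  obtain ⟨p, hp⟩ := centralGraph_exists_walk_inl htf (e : Sym2 V).out.1 x
  calc (centralGraph G).dist (.inr e) x
      ≤ (Walk.cons ((centralGraph_adj_inr_inl G).mpr (Sym2.out_fst_mem _)) p).length :=
        dist_le _
    _ ≤ 3 := by simp only [Walk.length_cons]; omega

end CentralGraph

/-- eccentricities in the central graph of a connected triangle-free graph
not isomorphic to K₁ or K₂. -/
theorem stmt_2 {V : Type*} [Fintype V] [DecidableEq V] (G : SimpleGraph V) [DecidableRel G.Adj]
    (hconn : G.Connected) (htf : G.CliqueFree 3)
    (h1 : ¬ Nonempty (G ≃g (⊤ : SimpleGraph (Fin 1))))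
    (h2 : ¬ Nonempty (G ≃g (⊤ : SimpleGraph (Fin 2)))) :
    (∀ v : V, ecc (centralGraph G) (Sum.inl v) = 2) ∧
    (∀ e : G.edgeSet, ecc (centralGraph G) (Sum.inr e) = 2 ∨ ecc (centralGraph G) (Sum.inr e) = 3) := by
  have hcard := three_le_card_of_connected hconn h1 h2
  refine ⟨fun v => le_antisymm (ecc_le (centralGraph_dist_inl_le_two htf v)) ?_, fun e => ?_⟩
  · have : Nontrivial V := Fintype.one_lt_card_iff_nontrivial.mp (by omega)
    obtain ⟨u, hvu⟩ := hconn.preconnected.exists_adj_of_nontrivial v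
    exact (centralGraph_dist_inl_of_adj G hvu).symm.trans_le (dist_le_ecc _ _ (Sum.inl u))
  · obtain ⟨u, hu⟩ := exists_notMem_sym2_of_three_le_card hcard e
    have hge : 2 ≤ ecc (centralGraph G) (.inr e) := by
      rw [← centralGraph_dist_inl_inr_of_notMem htf hu, dist_comm]
      exact dist_le_ecc _ _ _
    have hle : ecc (centralGraph G) (.inr e) ≤ 3 := ecc_le (centralGraph_dist_inr_le_three htf e)
    omega

end EccPaper
end

section
/- For every connected graph G, the eccentricity Wiener index satisfies W_ε(G) ≥ ε*(G)/2, where ε*(G) is the total eccentricity of G. Moreover, equality holds if G is an even cycle. -/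
/-!
Every vertex `u` has an eccentric vertex `v` with `d(u, v) = e(u)`; then `e(v) ≥ d(v, u) = e(u)`,
so the `(u, v)` entry of the eccentricity matrix is `e(u)`. The entries are nonnegative, so the
`u`-th row sum is at least `e(u)`, and summing over `u` gives `2 W_ε(G) ≥ ε*(G)`.

In the cycle `C_{2m}` the distance from `u` to `v` is `min(k, 2m - k)` with `k = (v - u) mod 2m`:
walking around the cycle gives `≤`, and `≥` holds because this circular norm changes by at most
one along an edge. Hence every vertex has eccentricity `m` and exactly one vertex, its antipode, at
distance `m`, so each row of the eccentricity matrix has the single nonzero entry `m = e(u)`.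
-/

open Finset

namespace EccPaper

variable {V : Type*}

section GraphMetric

open SimpleGraph

variable {W : Type*} {G : SimpleGraph V} {H : SimpleGraph W}

theorem _root_.SimpleGraph.Hom.edist_le (f : G →g H) (u v : V) :
    H.edist (f u) (f v) ≤ G.edist u v := by
  by_cases hr : G.Reachable u v
  · obtain ⟨p, hp⟩ := hr.exists_walk_length_eq_edist
    rw [← hp, ← Walk.length_map f]
    exact SimpleGraph.edist_le _
  · rw [edist_eq_top_of_not_reachable hr]
    exact le_top

theorem _root_.SimpleGraph.Iso.dist_eq (e : G ≃g H) (u v : V) :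
    H.dist (e u) (e v) = G.dist u v := by
  have hedist : H.edist (e u) (e v) = G.edist u v :=
    le_antisymm (Hom.edist_le e.toHom u v) (by simpa using Hom.edist_le e.symm.toHom (e u) (e v))
  rw [SimpleGraph.dist, SimpleGraph.dist, hedist]

theorem _root_.SimpleGraph.Reachable.le_add_dist {f : V → ℕ}
    (hf : ∀ a b, G.Adj a b → f b ≤ f a + 1) {u v : V} (h : G.Reachable u v) :
    f v ≤ f u + G.dist u v := by
  obtain ⟨p, hp⟩ := h.exists_walk_length_eq_dist
  rw [← hp]
  clear hp h
  induction p with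
  | nil => simp
  | cons hadj p ih =>
    have := hf _ _ hadj
    rw [Walk.length_cons]
    omega

theorem _root_.Fin.min_val_le_min_val_add_one_of_val_sub_eq_one {n : ℕ} {x y : Fin n}
    (h : (y - x).val = 1) :
    min y.val (n - y.val) ≤ min x.val (n - x.val) + 1 ∧
      min x.val (n - x.val) ≤ min y.val (n - y.val) + 1 := by
  have := y.isLt
  rcases le_or_gt x y with hxy | hxy
  · rw [Fin.coe_sub_iff_le.mpr hxy] at h
    omega
  · rw [Fin.coe_sub_iff_lt.mpr hxy] at h
    omega

theorem _root_.cycleGraph_dist_le_val_sub {n : ℕ} (u v : Fin n) :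
    (cycleGraph n).dist u v ≤ (v - u).val := by
  have := u.neZero
  suffices h : ∀ k, ∀ v : Fin n, (v - u).val = k → (cycleGraph n).dist u v ≤ k from
    h _ v rfl
  intro k
  induction k with
  | zero =>
    intro v hv
    rw [sub_eq_zero.mp (Fin.ext hv)]
    simp
  | succ k ih =>
    intro v hv
    have hn : 1 < n := by have := (v - u).isLt; omega
    have hadj : (cycleGraph n).Adj (v - 1) v := by
      rw [cycleGraph_adj', sub_sub_cancel, Fin.val_one', Nat.mod_eq_of_lt hn]
      exact Or.inr rfl
    have hprev : (v - 1 - u).val = k := by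
      rw [sub_right_comm, Fin.val_sub_one_of_ne_zero, hv]
      · rfl
      · exact fun h0 => by simp [h0] at hv
    calc (cycleGraph n).dist u v
        ≤ (cycleGraph n).dist u (v - 1) + (cycleGraph n).dist (v - 1) v :=
          hadj.reachable.dist_triangle_right u
      _ ≤ k + 1 := by
        rw [dist_eq_one_iff_adj.mpr hadj]
        exact Nat.add_le_add_right (ih _ hprev) 1

theorem _root_.cycleGraph_dist {n : ℕ} (u v : Fin n) :
    (cycleGraph n).dist u v = min (v - u).val (n - (v - u).val) := by
  have := u.neZero
  apply le_antisymm
  · have h₁ := cycleGraph_dist_le_val_sub u v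
    have h₂ := cycleGraph_dist_le_val_sub v u
    rw [dist_comm] at h₂
    have := v.isLt
    rcases lt_trichotomy u v with h | rfl | h
    · rw [Fin.coe_sub_iff_le.mpr h.le] at h₁ ⊢
      rw [Fin.coe_sub_iff_lt.mpr h] at h₂
      omega
    · simp
    · rw [Fin.coe_sub_iff_lt.mpr h] at h₁ ⊢
      rw [Fin.coe_sub_iff_le.mpr h.le] at h₂
      omega
  · have hlip : ∀ a b, (cycleGraph n).Adj a b →
        min (b - u).val (n - (b - u).val) ≤ min (a - u).val (n - (a - u).val) + 1 := by
      intro a b hab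
      rw [cycleGraph_adj'] at hab
      rcases hab with h | h
      · rw [← sub_sub_sub_cancel_right a b u] at h
        exact (Fin.min_val_le_min_val_add_one_of_val_sub_eq_one h).2
      · rw [← sub_sub_sub_cancel_right b a u] at h
        exact (Fin.min_val_le_min_val_add_one_of_val_sub_eq_one h).1
    simpa using (cycleGraph_preconnected u v).le_add_dist hlip

theorem _root_.SimpleGraph.eq_of_cycleGraph_add_self_dist_eq {m : ℕ} {u v w : Fin (m + m)}
    (hv : (cycleGraph (m + m)).dist u v = m)
    (hw : (cycleGraph (m + m)).dist u w = m) : v = w := by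
  have := u.neZero
  rw [cycleGraph_dist] at hv hw
  have := (v - u).isLt
  have := (w - u).isLt
  have hvw : v - u = w - u := Fin.ext (by omega)
  exact sub_left_inj.mp hvw

end GraphMetric

section Eccentricity

open SimpleGraph

variable {W : Type*} [Fintype V] {G : SimpleGraph V}

theorem dist_le_ecc_s9 (u v : V) : G.dist u v ≤ ecc G u :=
  le_sup (f := G.dist u) (mem_univ v)

theorem exists_dist_eq_ecc (u : V) : ∃ v, G.dist u v = ecc G u := by
  obtain ⟨v, -, hv⟩ := exists_mem_eq_sup univ ⟨u, mem_univ u⟩ (G.dist u)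
  exact ⟨v, hv.symm⟩

theorem ecc_iso_apply [Fintype W] {H : SimpleGraph W} (e : G ≃g H) (v : V) :
    ecc H (e v) = ecc G v := by
  apply le_antisymm
  · refine Finset.sup_le fun w _ => ?_
    rw [← e.apply_symm_apply w, e.dist_eq]
    exact dist_le_ecc_s9 _ _
  · refine Finset.sup_le fun u _ => ?_
    rw [← e.dist_eq]
    exact dist_le_ecc_s9 _ _

theorem eccMatR_nonneg (u v : V) : 0 ≤ eccMatR G u v := by
  unfold eccMatR
  split_ifs <;> positivity

theorem eccMatR_of_dist_eq_ecc {u v : V} (h : G.dist u v = ecc G u) :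
    eccMatR G u v = ecc G u := by
  have hle : ecc G u ≤ ecc G v := h ▸ dist_comm (G := G) ▸ dist_le_ecc_s9 v u
  simp [eccMatR, min_eq_left hle, h]

theorem ecc_le_sum_eccMatR (u : V) : (ecc G u : ℝ) ≤ ∑ v, eccMatR G u v := by
  obtain ⟨v, hv⟩ := exists_dist_eq_ecc (G := G) u
  rw [← eccMatR_of_dist_eq_ecc hv]
  exact single_le_sum (fun w _ => eccMatR_nonneg u w) (mem_univ v)

theorem totalEcc_div_two_le_eccWiener (G : SimpleGraph V) : totalEcc G / 2 ≤ eccWiener G := by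
  unfold totalEcc eccWiener
  gcongr with u
  exact ecc_le_sum_eccMatR u

theorem eccWiener_eq_totalEcc_div_two_of_unique_dist_eq {c : ℕ} (hecc : ∀ v, ecc G v = c)
    (huniq : ∀ u v w, G.dist u v = c → G.dist u w = c → v = w) :
    eccWiener G = totalEcc G / 2 := by
  suffices hrow : ∀ u, ∑ v, eccMatR G u v = ecc G u by
    simp only [eccWiener, totalEcc, hrow]
  intro u
  obtain ⟨v₀, hv₀⟩ := exists_dist_eq_ecc (G := G) u
  rw [sum_eq_single v₀ _ (by simp), eccMatR_of_dist_eq_ecc hv₀]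
  intro v _ hne
  have hv : G.dist u v ≠ c := fun hv => hne (huniq u v v₀ hv (hv₀.trans (hecc u)))
  simp [eccMatR, hecc, hv]

theorem ecc_cycleGraph_add_self {m : ℕ} (u : Fin (m + m)) :
    ecc (cycleGraph (m + m)) u = m := by
  have hm : m < m + m := by have := u.isLt; omega
  have := u.neZero
  apply le_antisymm
  · refine Finset.sup_le fun v _ => ?_
    rw [cycleGraph_dist]
    omega
  · calc m = (cycleGraph (m + m)).dist u (u + ⟨m, hm⟩) := by
          rw [cycleGraph_dist, add_sub_cancel_left, Fin.val_mk]
          omega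
      _ ≤ _ := dist_le_ecc_s9 _ _

end Eccentricity

theorem stmt_9_general {V : Type*} [Fintype V] (G : SimpleGraph V) :
    totalEcc G / 2 ≤ eccWiener G ∧
    ((∃ n : ℕ, Even n ∧ Nonempty (G ≃g SimpleGraph.cycleGraph n)) →
      eccWiener G = totalEcc G / 2) := by
  refine ⟨totalEcc_div_two_le_eccWiener G, ?_⟩
  rintro ⟨n, ⟨m, rfl⟩, ⟨e⟩⟩
  refine eccWiener_eq_totalEcc_div_two_of_unique_dist_eq (c := m) (fun v => ?_)
    (fun u v w hv hw => e.injective ?_)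
  · rw [← ecc_iso_apply e, ecc_cycleGraph_add_self]
  · rw [← e.dist_eq] at hv hw
    exact SimpleGraph.eq_of_cycleGraph_add_self_dist_eq hv hw

/-- W_ε(G) ≥ ε*(G)/2, with equality if G is an even cycle. -/
theorem stmt_9 {V : Type*} [Fintype V] (G : SimpleGraph V) (hconn : G.Connected) :
    totalEcc G / 2 ≤ eccWiener G ∧
    ((∃ n : ℕ, Even n ∧ Nonempty (G ≃g SimpleGraph.cycleGraph n)) →
      eccWiener G = totalEcc G / 2) :=
  stmt_9_general G

end EccPaper
end
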